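/- The single-session all-honest-committee probability p_h(n, t) = ((n − t)/n) · ∏_{i=1}^{t} (n − i − t)/(n − i) is nonincreasing in t for fixed n, for 0 ≤ t with n ≥ 3t + 1. -/

import Mathlib

/-- The single-session all-honest-committee probability. -/
noncomputable def ph (n t : ℕ) : ℝ :=
  (((n : ℝ) - t) / n) * ∏ i ∈ Finset.Icc 1 t, ((n : ℝ) - i - t) / ((n : ℝ) - i)

/-!
Absorbing the leading factor as the term `i = 0`, `p_h(n, t) = ∏_{i=0}^{t} (n - i - t)/(n - i)`.
Passing from `t` to `t + 1` lowers every numerator by one and appends the factor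
`(n - 2t - 1)/(n - t - 1) ∈ [0, 1]`; as long as `n ≥ 2t + 2` all factors are nonnegative,
so the product can only decrease.
-/

open Finset

lemma ph_eq_prod_range (n t : ℕ) :
    ph n t = ∏ i ∈ range (t + 1), ((n : ℝ) - i - t) / (n - i) := by
  rw [ph, prod_range_succ', ← Ico_add_one_right_eq_Icc, prod_Ico_eq_prod_range]
  simp only [Nat.add_sub_cancel, add_comm 1, Nat.cast_add, Nat.cast_one, Nat.cast_zero, sub_zero]
  ring

lemma ph_succ_le (n t : ℕ) (hn : 2 * t + 2 ≤ n) : ph n (t + 1) ≤ ph n t := by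
  have hn' : (2 * t + 2 : ℝ) ≤ n := by exact_mod_cast hn
  have factor_nonneg : ∀ s ≤ t + 1, ∀ i ∈ range (t + 2), 0 ≤ ((n : ℝ) - i - s) / (n - i) := by
    intro s hs i hi
    have hs : (s : ℝ) ≤ t + 1 := by exact_mod_cast hs
    have hi : (i : ℝ) ≤ t + 1 := by exact_mod_cast Nat.lt_succ_iff.mp (mem_range.mp hi)
    apply div_nonneg <;> linarith
  rw [ph_eq_prod_range, ph_eq_prod_range]
  calc ∏ i ∈ range (t + 2), ((n : ℝ) - i - (t + 1 : ℕ)) / (n - i)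
      ≤ ∏ i ∈ range (t + 2), ((n : ℝ) - i - t) / (n - i) := by
        refine prod_le_prod (factor_nonneg _ le_rfl) fun i hi => ?_
        have hi : (i : ℝ) ≤ t + 1 := by exact_mod_cast Nat.lt_succ_iff.mp (mem_range.mp hi)
        gcongr <;> linarith
    _ = (∏ i ∈ range (t + 1), ((n : ℝ) - i - t) / (n - i))
          * (((n : ℝ) - (t + 1 : ℕ) - t) / (n - (t + 1 : ℕ))) := prod_range_succ _ _
    _ ≤ (∏ i ∈ range (t + 1), ((n : ℝ) - i - t) / (n - i)) * 1 := by
        gcongr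
        · exact prod_nonneg fun i hi =>
            factor_nonneg t t.le_succ i (range_subset_range.mpr (by omega) hi)
        · push_cast
          rw [div_le_one (by linarith)]
          linarith
    _ = _ := mul_one _

/-- For fixed `n`, the probability `p_h(n, t)` is nonincreasing in `t`
over the range where `n ≥ 3t + 1`. -/
theorem ph_antitone_in_t (n t₁ t₂ : ℕ) (h12 : t₁ ≤ t₂) (hn : n ≥ 3 * t₂ + 1) :
    ph n t₂ ≤ ph n t₁ := by
  induction t₂, h12 using Nat.le_induction with
  | base => exact le_rfl
  | succ t _ ih => exact (ph_succ_le n t (by omega)).trans (ih (by omega))
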